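/- arXiv:1809.10615 — 5 statements merged into one kernel-verified Lean document; each statement's English description precedes it below -/
import Mathlib

section
/- Let m and n be Leibniz algebras with mutual Leibniz actions on each other, arising from Leibniz crossed modules η : m → q and δ : n → q over a common Leibniz algebra q. Then the subspace m□n of the non-abelian tensor product m⋆n, generated by the elements m⋆n' − n⋆m' with η(m) = δ(n) and η(m') = δ(n'), is contained in the center of m⋆n; in particular m□n is a two-sided ideal of m⋆n. -/
/-- Mixin: a non-unital non-associative ring is a Leibniz algebra if its
multiplication (thought of as the bracket) satisfies the Leibniz identity. -/
class IsLeibniz (L : Type*) [NonUnitalNonAssocRing L] : Prop where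
  leibniz : ∀ x y z : L, x * (y * z) = x * y * z - x * z * y

/-- A Leibniz action of `Q` on `N`. -/
structure LeibnizAction (K : Type*) [Field K] (Q N : Type*)
    [NonUnitalNonAssocRing Q] [NonUnitalNonAssocRing N]
    [Module K Q] [Module K N] where
  actL : Q →ₗ[K] N →ₗ[K] N
  actR : N →ₗ[K] Q →ₗ[K] N
  actL_mul : ∀ q q' n, actL (q * q') n = actL q (actL q' n) + actR (actL q n) q'
  mul_actL : ∀ q n n', actL q (n * n') = actL q n * n' - actL q n' * n
  actR_mul : ∀ n q q', actR n (q * q') = actR (actR n q) q' - actR (actR n q') q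
  mul_actR : ∀ n n' q, actR (n * n') q = actR n q * n' + n * actR n' q
  actL_actL : ∀ q q' n, actL q (actL q' n) = - actL q (actR n q')
  mul_actL' : ∀ n q n', n * actL q n' = -(n * actR n' q)

/-- A Leibniz crossed module `(N, Q, bdry)`. -/
structure LeibnizXMod (K : Type*) [Field K] (N Q : Type*)
    [NonUnitalNonAssocRing N] [NonUnitalNonAssocRing Q]
    [Module K N] [Module K Q] extends LeibnizAction K Q N where
  bdry : N →ₗ[K] Q
  bdry_mul : ∀ n n', bdry (n * n') = bdry n * bdry n'
  bdry_actL : ∀ q n, bdry (actL q n) = q * bdry n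
  bdry_actR : ∀ n q, bdry (actR n q) = bdry n * q
  peiffer_l : ∀ n₁ n₂, actL (bdry n₁) n₂ = n₁ * n₂
  peiffer_r : ∀ n₁ n₂, actR n₁ (bdry n₂) = n₁ * n₂

/-- Homomorphism of Leibniz crossed modules. -/
structure XModHom (K : Type*) [Field K] {H P N Q : Type*}
    [NonUnitalNonAssocRing H] [NonUnitalNonAssocRing P]
    [NonUnitalNonAssocRing N] [NonUnitalNonAssocRing Q]
    [Module K H] [Module K P] [Module K N] [Module K Q]
    (X : LeibnizXMod K H P) (Y : LeibnizXMod K N Q) where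
  f₁ : H →ₗ[K] N
  f₂ : P →ₗ[K] Q
  f₁_mul : ∀ h h', f₁ (h * h') = f₁ h * f₁ h'
  f₂_mul : ∀ p p', f₂ (p * p') = f₂ p * f₂ p'
  comm : ∀ h, f₂ (X.bdry h) = Y.bdry (f₁ h)
  actL_compat : ∀ p h, f₁ (X.actL p h) = Y.actL (f₂ p) (f₁ h)
  actR_compat : ∀ h p, f₁ (X.actR h p) = Y.actR (f₁ h) (f₂ p)

section Tensor

variable (K : Type*) [Field K]

/-- Gnedbaye's relations (3a)-(5d) for a pair of bilinear maps
`el : M → N → T` (for `m ∗ n`) and `er : N → M → T` (for `n ∗ m`) out of two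
Leibniz algebras with mutual Leibniz actions `mn` (of `M` on `N`) and
`nm` (of `N` on `M`).  The bilinearity relations (1a)-(2d) are encoded by
`el`, `er` being bundled bilinear maps. -/
structure TensorRels {M N T : Type*}
    [NonUnitalNonAssocRing M] [NonUnitalNonAssocRing N] [NonUnitalNonAssocRing T]
    [Module K M] [Module K N] [Module K T]
    (mn : LeibnizAction K M N) (nm : LeibnizAction K N M)
    (el : M →ₗ[K] N →ₗ[K] T) (er : N →ₗ[K] M →ₗ[K] T) : Prop where
  rel3a : ∀ m n n', el m (n * n') = el (nm.actR m n) n' - el (nm.actR m n') n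
  rel3b : ∀ n m m', er n (m * m') = er (mn.actR n m) m' - er (mn.actR n m') m
  rel3c : ∀ m m' n, el (m * m') n = er (mn.actL m n) m' - el m (mn.actR n m')
  rel3d : ∀ n n' m, er (n * n') m = el (nm.actL n m) n' - er n (nm.actR m n')
  rel4a : ∀ m m' n, el m (mn.actL m' n) = - el m (mn.actR n m')
  rel4b : ∀ n n' m, er n (nm.actL n' m) = - er n (nm.actR m n')
  rel5a : ∀ m n m' n', el m n * el m' n' = el (nm.actR m n) (mn.actL m' n') ∧
      el m n * el m' n' = er (mn.actL m n) (nm.actR m' n')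
  rel5b : ∀ n m n' m', er n m * er n' m' = el (nm.actL n m) (mn.actR n' m') ∧
      er n m * er n' m' = er (mn.actR n m) (nm.actL n' m')
  rel5c : ∀ m n n' m', el m n * er n' m' = el (nm.actR m n) (mn.actR n' m') ∧
      el m n * er n' m' = er (mn.actL m n) (nm.actL n' m')
  rel5d : ∀ n m m' n', er n m * el m' n' = el (nm.actL n m) (mn.actL m' n') ∧
      er n m * el m' n' = er (mn.actR n m) (nm.actR m' n')

/-- A presentation of the non-abelian tensor product `m ⋆ n` of Leibniz
algebras with mutual actions: a Leibniz algebra `T` generated by symbols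
`el m n` and `er n m` subject to relations (1a)-(5d), universal among such. -/
structure NATensor {M N T : Type*}
    [NonUnitalNonAssocRing M] [NonUnitalNonAssocRing N] [NonUnitalNonAssocRing T]
    [Module K M] [Module K N] [Module K T]
    [SMulCommClass K T T] [IsScalarTower K T T]
    (mn : LeibnizAction K M N) (nm : LeibnizAction K N M) where
  el : M →ₗ[K] N →ₗ[K] T
  er : N →ₗ[K] M →ₗ[K] T
  rels : TensorRels K mn nm el er
  gen : NonUnitalAlgebra.adjoin K
      ({t : T | ∃ m n, t = el m n ∨ t = er n m}) = ⊤
  univ : ∀ (S : Type*) [NonUnitalNonAssocRing S] [IsLeibniz S] [Module K S]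
      [SMulCommClass K S S] [IsScalarTower K S S]
      (f : M →ₗ[K] N →ₗ[K] S) (g : N →ₗ[K] M →ₗ[K] S),
      TensorRels K mn nm f g →
      ∃ φ : T →ₗ[K] S, (∀ a b : T, φ (a * b) = φ a * φ b) ∧
        (∀ m n, φ (el m n) = f m n) ∧ (∀ n m, φ (er n m) = g n m)

/-- A presentation of the non-abelian exterior product `m ⋀ n` : as `NATensor`
but moreover the square relations `m ∗ n' = n ∗ m'` (whenever the structural
maps `sM : M → C`, `sN : N → C` satisfy `sM m = sN n`, `sM m' = sN n'`) hold,
and it is universal among Leibniz algebras with such data. -/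
structure NAExterior {M N T C : Type*}
    [NonUnitalNonAssocRing M] [NonUnitalNonAssocRing N] [NonUnitalNonAssocRing T]
    [Module K M] [Module K N] [Module K T] [AddCommGroup C] [Module K C]
    [SMulCommClass K T T] [IsScalarTower K T T]
    (mn : LeibnizAction K M N) (nm : LeibnizAction K N M)
    (sM : M →ₗ[K] C) (sN : N →ₗ[K] C) where
  el : M →ₗ[K] N →ₗ[K] T
  er : N →ₗ[K] M →ₗ[K] T
  rels : TensorRels K mn nm el er
  sq : ∀ m n m' n', sM m = sN n → sM m' = sN n' → el m n' = er n m'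
  gen : NonUnitalAlgebra.adjoin K
      ({t : T | ∃ m n, t = el m n ∨ t = er n m}) = ⊤
  univ : ∀ (S : Type*) [NonUnitalNonAssocRing S] [IsLeibniz S] [Module K S]
      [SMulCommClass K S S] [IsScalarTower K S S]
      (f : M →ₗ[K] N →ₗ[K] S) (g : N →ₗ[K] M →ₗ[K] S),
      TensorRels K mn nm f g →
      (∀ m n m' n', sM m = sN n → sM m' = sN n' → f m n' = g n m') →
      ∃ φ : T →ₗ[K] S, (∀ a b : T, φ (a * b) = φ a * φ b) ∧
        (∀ m n, φ (el m n) = f m n) ∧ (∀ n m, φ (er n m) = g n m)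

end Tensor

/-- Let `m`, `n` be Leibniz algebras acting on each other via
Leibniz crossed modules `η : m → q`, `δ : n → q` over a common `q`.  Then the
subspace `m□n` of `m⋆n` generated by the elements `m∗n' − n∗m'` with
`η m = δ n`, `η m' = δ n'` is contained in the center of `m⋆n`; in particular
it is a two-sided ideal of `m⋆n`. -/
theorem stmt7 {K M N Q T : Type*} [Field K]
    [NonUnitalNonAssocRing M] [NonUnitalNonAssocRing N]
    [NonUnitalNonAssocRing Q] [NonUnitalNonAssocRing T]
    [IsLeibniz M] [IsLeibniz N] [IsLeibniz Q] [IsLeibniz T]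
    [Module K M] [Module K N] [Module K Q] [Module K T]
    [SMulCommClass K M M] [IsScalarTower K M M]
    [SMulCommClass K N N] [IsScalarTower K N N]
    [SMulCommClass K Q Q] [IsScalarTower K Q Q]
    [SMulCommClass K T T] [IsScalarTower K T T]
    (X : LeibnizXMod K M Q) (Y : LeibnizXMod K N Q)
    -- the induced mutual actions of `m` and `n` on each other via `q`:
    (mn : LeibnizAction K M N) (nm : LeibnizAction K N M)
    (hmnL : ∀ m n, mn.actL m n = Y.actL (X.bdry m) n)
    (hmnR : ∀ n m, mn.actR n m = Y.actR n (X.bdry m))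
    (hnmL : ∀ n m, nm.actL n m = X.actL (Y.bdry n) m)
    (hnmR : ∀ m n, nm.actR m n = X.actR m (Y.bdry n))
    -- the non-abelian tensor product `m ⋆ n`:
    (TP : NATensor K mn nm (T := T)) :
    ∀ z ∈ Submodule.span K
        {z : T | ∃ m n m' n', X.bdry m = Y.bdry n ∧ X.bdry m' = Y.bdry n' ∧
          z = TP.el m n' - TP.er n m'},
      ∀ t : T, z * t = 0 ∧ t * z = 0 := by
    -- main lemma: each generator of the square is central
  have main : ∀ g ∈ {z : T | ∃ m n m' n', X.bdry m = Y.bdry n ∧ X.bdry m' = Y.bdry n' ∧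
      z = TP.el m n' - TP.er n m'}, ∀ t : T, g * t = 0 ∧ t * g = 0 := by
    rintro g ⟨m, n, m', n', hm, hm', rfl⟩ t
    set g : T := TP.el m n' - TP.er n m' with hg
    have key : nm.actR m n' = m * m' := by
      rw [hnmR, ← hm', X.peiffer_r]
    have key' : nm.actL n m' = m * m' := by
      rw [hnmL, ← hm, X.peiffer_l]
    -- central on the generating set
    have hgen : ∀ t ∈ {t : T | ∃ m₂ n₂, t = TP.el m₂ n₂ ∨ t = TP.er n₂ m₂},
        g * t = 0 ∧ t * g = 0 := by
      rintro t ⟨m₂, n₂, ht | ht⟩ <;> subst ht <;> constructor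
      · rw [hg, sub_mul, (TP.rels.rel5a m n' m₂ n₂).1, (TP.rels.rel5d n m' m₂ n₂).1,
          key, key', sub_self]
      · rw [hg, mul_sub, (TP.rels.rel5a m₂ n₂ m n').2, (TP.rels.rel5c m₂ n₂ n m').2,
          key, key', sub_self]
      · rw [hg, sub_mul, (TP.rels.rel5c m n' n₂ m₂).1, (TP.rels.rel5b n m' n₂ m₂).1,
          key, key', sub_self]
      · rw [hg, mul_sub, (TP.rels.rel5d n₂ m₂ m n').2, (TP.rels.rel5b n₂ m₂ n m').2,
          key, key', sub_self]
    have ht : t ∈ NonUnitalAlgebra.adjoin K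
        ({t : T | ∃ m n, t = TP.el m n ∨ t = TP.er n m}) := by
      rw [TP.gen]; trivial
    refine NonUnitalAlgebra.adjoin_induction
      (p := fun t _ => g * t = 0 ∧ t * g = 0) hgen ?_ ?_ ?_ ?_ ht
    · rintro x y _ _ ⟨hx1, hx2⟩ ⟨hy1, hy2⟩
      constructor <;> simp [mul_add, add_mul, hx1, hx2, hy1, hy2]
    · simp
    · rintro x y _ _ ⟨hx1, hx2⟩ ⟨hy1, hy2⟩
      constructor
      · rw [IsLeibniz.leibniz g x y, hx1, hy1, zero_mul, zero_mul, sub_self]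
      · have := IsLeibniz.leibniz x y g
        rw [hy2, mul_zero, hx2, zero_mul, sub_zero] at this
        exact this.symm
    · rintro r x _ ⟨hx1, hx2⟩
      constructor <;> simp [mul_smul_comm, smul_mul_assoc, hx1, hx2]
  intro z hz t
  refine Submodule.span_induction (p := fun z _ => z * t = 0 ∧ t * z = 0) ?_ ?_ ?_ ?_ hz
  · intro g hg; exact ⟨(main g hg t).1, (main g hg t).2⟩
  · simp
  · rintro x y _ _ ⟨hx1, hx2⟩ ⟨hy1, hy2⟩
    constructor <;> simp [add_mul, mul_add, hx1, hx2, hy1, hy2]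
  · rintro r x _ ⟨hx1, hx2⟩
    constructor <;> simp [smul_mul_assoc, mul_smul_comm, hx1, hx2]
end

section
/- Let (n, q, δ) be a Leibniz crossed module and let φ = (λ̄_n, μ̄_q) : (q⋀n, q⋀q, id⋀δ) → (n, q, δ) be the crossed module homomorphism induced by λ̄_n(q⋀n) = ^q n, λ̄_n(n⋀q) = n^q and μ̄_q(q⋀q') = [q,q']. Then Ker(φ) is contained in the center of the crossed module (q⋀n, q⋀q, id⋀δ); in particular, every element of Ker(λ̄_n) is annihilated by the action of q⋀q, and Ker(μ̄_q) ⊆ Z(q⋀q) ∩ st_{q⋀q}(q⋀n). -/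
/-- Auxiliary: if a Leibniz algebra `T` is generated by a set `G`, `F` is a
bilinear map such that products of generators are given by `F`, `F` lands in
`G`, and `F` satisfies the two Leibniz-compatibility identities, then all
products in `T` are given by `F`. -/
theorem aux_prod {K T : Type*} [Field K] [NonUnitalNonAssocRing T] [IsLeibniz T]
    [Module K T] [SMulCommClass K T T] [IsScalarTower K T T]
    (G : Set T) (hgen : NonUnitalAlgebra.adjoin K G = ⊤)
    (F : T →ₗ[K] T →ₗ[K] T)
    (h1 : ∀ g ∈ G, ∀ g' ∈ G, g * g' = F g g')
    (h2 : ∀ y y', F y y' ∈ G)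
    (h3 : ∀ y u v, F y (u * v) = F (F y u) v - F (F y v) u)
    (h5 : ∀ u v y, F (u * v) y = F u (F v y) + F (F u y) v) :
    ∀ y y', y * y' = F y y' := by
  have hmem : ∀ y : T, y ∈ NonUnitalAlgebra.adjoin K G := by
    intro y; rw [hgen]; exact trivial
  have lb1 : ∀ x y z : T, x * (y * z) = x * y * z - x * z * y := IsLeibniz.leibniz
  have lb2 : ∀ x y z : T, x * y * z = x * (y * z) + x * z * y := by
    intro x y z; rw [lb1]; abel
  have step1 : ∀ y : T, ∀ g ∈ G, y * g = F y g ∧ g * y = F g y := by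
    intro y
    induction hmem y using NonUnitalAlgebra.adjoin_induction with
    | mem a ha => exact fun g hg => ⟨h1 a ha g hg, h1 g hg a ha⟩
    | zero => intro g hg; simp
    | add a b ha hb iha ihb =>
        intro g hg
        constructor
        · rw [add_mul, (iha g hg).1, (ihb g hg).1]; simp
        · rw [mul_add, (iha g hg).2, (ihb g hg).2]; simp
    | smul r a ha iha =>
        intro g hg
        constructor
        · rw [smul_mul_assoc, (iha g hg).1]; simp
        · rw [mul_smul_comm, (iha g hg).2]; simp
    | mul a b ha hb iha ihb =>
        intro g hg
        constructor
        · rw [lb2 a b g, (ihb g hg).1, (iha (F b g) (h2 b g)).1,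
            (iha g hg).1, (ihb (F a g) (h2 a g)).2, h5 a b g]
        · rw [lb1 g a b, (iha g hg).2, (ihb (F g a) (h2 g a)).2,
            (ihb g hg).2, (iha (F g b) (h2 g b)).2, h3 g a b]
  have step2 : ∀ y' : T, ∀ y : T, y * y' = F y y' ∧ y' * y = F y' y := by
    intro y'
    induction hmem y' using NonUnitalAlgebra.adjoin_induction with
    | mem a ha => exact fun y => step1 y a ha
    | zero => intro y; simp
    | add a b ha hb iha ihb =>
        intro y
        constructor
        · rw [mul_add, (iha y).1, (ihb y).1]; simp
        · rw [add_mul, (iha y).2, (ihb y).2]; simp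
    | smul r a ha iha =>
        intro y
        constructor
        · rw [mul_smul_comm, (iha y).1]; simp
        · rw [smul_mul_assoc, (iha y).2]; simp
    | mul a b ha hb iha ihb =>
        intro y
        constructor
        · rw [lb1 y a b, (iha y).1, (ihb (F y a)).1, (ihb y).1, (iha (F y b)).1,
            h3 y a b]
        · rw [lb2 a b y, (ihb y).2, (iha (F b y)).2, (iha y).2, (ihb (F a y)).1,
            h5 a b y]
  exact fun y y' => (step2 y' y).1


/-- For a Leibniz crossed module `(n,q,δ)` and the induced
crossed module homomorphism `φ = (λ̄_n, μ̄_q) : (q⋀n, q⋀q, id⋀δ) → (n,q,δ)`,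
the kernel of `φ` is contained in the center of `(q⋀n, q⋀q, id⋀δ)`: every
element of `Ker λ̄_n` is annihilated by the action of `q⋀q`, and
`Ker μ̄_q ⊆ Z(q⋀q) ∩ st_{q⋀q}(q⋀n)`. -/

theorem stmt10 {K N Q T T' : Type*} [Field K]
    [NonUnitalNonAssocRing N] [NonUnitalNonAssocRing Q]
    [NonUnitalNonAssocRing T] [NonUnitalNonAssocRing T']
    [IsLeibniz N] [IsLeibniz Q] [IsLeibniz T] [IsLeibniz T']
    [Module K N] [Module K Q] [Module K T] [Module K T']
    [SMulCommClass K N N] [IsScalarTower K N N]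
    [SMulCommClass K Q Q] [IsScalarTower K Q Q]
    [SMulCommClass K T T] [IsScalarTower K T T]
    [SMulCommClass K T' T'] [IsScalarTower K T' T']
    (X : LeibnizXMod K N Q)
    -- the action of `n` on `q` induced by `δ`:
    (nq : LeibnizAction K N Q)
    (hnqL : ∀ n q, nq.actL n q = X.bdry n * q)
    (hnqR : ∀ q n, nq.actR q n = q * X.bdry n)
    -- the bracket action of `q` on itself:
    (qq : LeibnizAction K Q Q)
    (hqqL : ∀ a b : Q, qq.actL a b = a * b)
    (hqqR : ∀ a b : Q, qq.actR a b = a * b)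
    -- the non-abelian exterior products `q ⋀ n` (structural maps `id`, `δ`)
    -- and `q ⋀ q` (structural maps `id`, `id`):
    (EN : NAExterior K X.toLeibnizAction nq (LinearMap.id : Q →ₗ[K] Q) X.bdry (T := T))
    (EQ : NAExterior K qq qq (LinearMap.id : Q →ₗ[K] Q) (LinearMap.id : Q →ₗ[K] Q) (T := T'))
    -- the structure map `μ̄_q : q⋀q → q`:
    (mu : T' →ₗ[K] Q)
    (hmu_mul : ∀ a b : T', mu (a * b) = mu a * mu b)
    (hmu_el : ∀ a b : Q, mu (EQ.el a b) = a * b)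
    (hmu_er : ∀ a b : Q, mu (EQ.er a b) = a * b)

    -- the exterior crossed module structure `(q⋀n, q⋀q, id⋀δ)`:
    (X' : LeibnizXMod K T T')
    (hbd_el : ∀ q n, X'.bdry (EN.el q n) = EQ.el q (X.bdry n))
    (hbd_er : ∀ n q, X'.bdry (EN.er n q) = EQ.el (X.bdry n) q)
    (hact : ∀ (x : T') (y : T) (q : Q), mu x = q →
      (∀ (q' : Q) (n' : N), y = EN.el q' n' →
        X'.actL x y = EN.el (q * q') n' - EN.er (X.actL q n') q' ∧
        X'.actR y x = EN.el (q' * q) n' + EN.el q' (X.actR n' q)) ∧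
      (∀ (n' : N) (q' : Q), y = EN.er n' q' →
        X'.actL x y = EN.er (X.actL q n') q' - EN.el (q * q') n' ∧
        X'.actR y x = EN.er (X.actR n' q) q' + EN.er n' (q' * q)))
    -- the map `λ̄_n : q⋀n → n`:
    (lam : T →ₗ[K] N)
    (hlam_mul : ∀ a b : T, lam (a * b) = lam a * lam b)
    (hlam_el : ∀ q n, lam (EN.el q n) = X.actL q n)
    (hlam_er : ∀ n q, lam (EN.er n q) = X.actR n q) :
    (∀ y : T, lam y = 0 → ∀ x : T', X'.actL x y = 0 ∧ X'.actR y x = 0) ∧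
    (∀ x : T', mu x = 0 →
      (∀ y : T, X'.actL x y = 0 ∧ X'.actR y x = 0) ∧
      (∀ x' : T', x * x' = 0 ∧ x' * x = 0)) := by
  -- the bilinear map giving products in `T = q⋀n`
  set FT : T →ₗ[K] T →ₗ[K] T := ((EN.el).comp ((X.bdry).comp lam)).compl₂ lam with hFTdef
  have hFT : ∀ y y' : T, FT y y' = EN.el (X.bdry (lam y)) (lam y') := fun _ _ => rfl
  -- the bilinear map giving products in `T' = q⋀q`
  set FQ : T' →ₗ[K] T' →ₗ[K] T' := ((EQ.el).comp mu).compl₂ mu with hFQdef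
  have hFQ : ∀ x x' : T', FQ x x' = EQ.el (mu x) (mu x') := fun _ _ => rfl
  have heler : ∀ a b : Q, EQ.el a b = EQ.er a b := fun a b => EQ.sq a a b b rfl rfl
  -- products in T
  have keyT : ∀ y y' : T, y * y' = EN.el (X.bdry (lam y)) (lam y') := by
    have h1 : ∀ g ∈ {t : T | ∃ m n, t = EN.el m n ∨ t = EN.er n m},
        ∀ g' ∈ {t : T | ∃ m n, t = EN.el m n ∨ t = EN.er n m}, g * g' = FT g g' := by
      rintro g ⟨m, n, rfl | rfl⟩ g' ⟨m', n', rfl | rfl⟩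
      · rw [hFT, hlam_el, hlam_el, X.bdry_actL, (EN.rels.rel5a m n m' n').1, hnqR]
      · rw [hFT, hlam_el, hlam_er, X.bdry_actL, (EN.rels.rel5c m n n' m').1, hnqR]
      · rw [hFT, hlam_er, hlam_el, X.bdry_actR, (EN.rels.rel5d n m m' n').1, hnqL]
      · rw [hFT, hlam_er, hlam_er, X.bdry_actR, (EN.rels.rel5b n m n' m').1, hnqL]
    have h2 : ∀ y y' : T, FT y y' ∈ {t : T | ∃ m n, t = EN.el m n ∨ t = EN.er n m} :=
      fun y y' => ⟨X.bdry (lam y), lam y', Or.inl (hFT y y')⟩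
    have h3 : ∀ y u v : T, FT y (u * v) = FT (FT y u) v - FT (FT y v) u := by
      intro y u v
      simp only [hFT, hlam_mul, hlam_el, X.bdry_actL]
      rw [EN.rels.rel3a, hnqR, hnqR]
    have h5 : ∀ u v y : T, FT (u * v) y = FT u (FT v y) + FT (FT u y) v := by
      intro u v y
      simp only [hFT, hlam_mul, hlam_el, X.bdry_mul, X.bdry_actL]
      rw [X.peiffer_l, EN.rels.rel3a, hnqR, hnqR]
      abel
    intro y y'
    exact (aux_prod _ EN.gen FT h1 h2 h3 h5 y y').trans (hFT y y')
  -- products in T'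
  have keyQ : ∀ x x' : T', x * x' = EQ.el (mu x) (mu x') := by
    have base : ∀ a b a' b' : Q, EQ.el a b * EQ.el a' b' = FQ (EQ.el a b) (EQ.el a' b') := by
      intro a b a' b'
      rw [hFQ, hmu_el, hmu_el, (EQ.rels.rel5a a b a' b').1, hqqR, hqqL]
    have h1 : ∀ g ∈ {t : T' | ∃ m n, t = EQ.el m n ∨ t = EQ.er n m},
        ∀ g' ∈ {t : T' | ∃ m n, t = EQ.el m n ∨ t = EQ.er n m}, g * g' = FQ g g' := by
      rintro g ⟨m, n, rfl | rfl⟩ g' ⟨m', n', rfl | rfl⟩ <;>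
        (try simp only [← heler]) <;> exact base ..
    have h2 : ∀ x x' : T', FQ x x' ∈ {t : T' | ∃ m n, t = EQ.el m n ∨ t = EQ.er n m} :=
      fun x x' => ⟨mu x, mu x', Or.inl (hFQ x x')⟩
    have h3 : ∀ x u v : T', FQ x (u * v) = FQ (FQ x u) v - FQ (FQ x v) u := by
      intro x u v
      simp only [hFQ, hmu_mul, hmu_el]
      rw [EQ.rels.rel3a, hqqR, hqqR]
    have h5 : ∀ u v y : T', FQ (u * v) y = FQ u (FQ v y) + FQ (FQ u y) v := by
      intro u v y
      simp only [hFQ, hmu_mul, hmu_el]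
      rw [EQ.rels.rel3a, hqqR, hqqR]
      abel
    intro x x'
    exact (aux_prod _ EQ.gen FQ h1 h2 h3 h5 x x').trans (hFQ x x')
  -- how T' acts on T
  have hmemT : ∀ y : T,
      y ∈ NonUnitalAlgebra.adjoin K {t : T | ∃ m n, t = EN.el m n ∨ t = EN.er n m} := by
    intro y; rw [EN.gen]; exact trivial
  have keyact : ∀ y : T, ∀ x : T',
      X'.actL x y = EN.el (mu x) (lam y) ∧ X'.actR y x = EN.er (lam y) (mu x) := by
    intro y
    induction hmemT y using NonUnitalAlgebra.adjoin_induction with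
    | mem g hg =>
        intro x
        obtain ⟨m, n, rfl | rfl⟩ := hg
        · obtain ⟨hL, hR⟩ := (hact x (EN.el m n) (mu x) rfl).1 m n rfl
          constructor
          · rw [hL, hlam_el, EN.rels.rel3c (mu x) m n, EN.rels.rel4a (mu x) m n]
            abel
          · rw [hR, hlam_el, EN.rels.rel3c m (mu x) n]
            abel
        · obtain ⟨hL, hR⟩ := (hact x (EN.er n m) (mu x) rfl).2 n m rfl
          constructor
          · rw [hL, hlam_er, EN.rels.rel3c (mu x) m n]
            abel
          · rw [hR, hlam_er, EN.rels.rel3b n m (mu x)]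
            abel
    | zero => intro x; simp
    | add a b ha hb iha ihb =>
        intro x
        constructor
        · simp [map_add, (iha x).1, (ihb x).1]
        · simp [map_add, (iha x).2, (ihb x).2]
    | smul r a ha iha =>
        intro x
        constructor
        · simp [map_smul, (iha x).1]
        · simp [map_smul, (iha x).2]
    | mul u v hu hv ihu ihv =>
        intro x
        constructor
        · rw [X'.mul_actL x u v, (ihu x).1, (ihv x).1, hlam_mul,
            keyT (EN.el (mu x) (lam u)) v, keyT (EN.el (mu x) (lam v)) u,
            hlam_el, hlam_el, X.bdry_actL, X.bdry_actL, EN.rels.rel3a, hnqR, hnqR]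
        · rw [X'.mul_actR u v x, (ihu x).2, (ihv x).2, hlam_mul,
            keyT (EN.er (lam u) (mu x)) v, keyT u (EN.er (lam v) (mu x)),
            hlam_er, hlam_er, X.bdry_actR]
          have hsq : EN.el (X.bdry (lam u)) (X.actL (mu x) (lam v)) =
              EN.er (lam u) (mu x * X.bdry (lam v)) := by
            have := EN.sq (X.bdry (lam u)) (lam u) (mu x * X.bdry (lam v))
              (X.actL (mu x) (lam v)) (by simp) (by simp [X.bdry_actL])
            exact this
          rw [EN.rels.rel3d (lam u) (lam v) (mu x), hnqL, hnqR, ← hsq,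
            EN.rels.rel4a (X.bdry (lam u)) (mu x) (lam v)]
          abel
  refine ⟨?_, ?_⟩
  · intro y hy x
    obtain ⟨hL, hR⟩ := keyact y x
    constructor
    · rw [hL, hy]; simp
    · rw [hR, hy]; simp
  · intro x hx
    refine ⟨fun y => ?_, fun x' => ?_⟩
    · obtain ⟨hL, hR⟩ := keyact y x
      constructor
      · rw [hL, hx]; simp
      · rw [hR, hx]; simp
    · constructor
      · rw [keyQ x x', hx]; simp
      · rw [keyQ x' x, hx]; simp
end

section
/- Let (n,q,δ) be a perfect Leibniz crossed module and (e) : 0 → (a,b,σ) → (h,p,σ) → (n,q,δ) → 0 a central extension that is a stem cover. Then (h,p,σ) is perfect; moreover b⋆p = 0 (hence b⋀p = 0), where b⋆p is the non-abelian tensor product with actions induced from the crossed module structure. -/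
section Invariants

variable {K : Type*} [Field K] {N Q : Type*}
  [NonUnitalNonAssocRing N] [NonUnitalNonAssocRing Q] [Module K N] [Module K Q]
  [SMulCommClass K Q Q] [IsScalarTower K Q Q]

/-- `D_q(n)`: the `n`-component of the derived crossed module of `(n,q,δ)`. -/
def dN (X : LeibnizXMod K N Q) : Submodule K N :=
  Submodule.span K {x : N | ∃ q n, x = X.actL q n ∨ x = X.actR n q}

/-- `[q,q]`: the `q`-component of the derived crossed module. -/
def dQ (K : Type*) [Field K] (Q : Type*) [NonUnitalNonAssocRing Q] [Module K Q] :
    Submodule K Q :=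
  Submodule.span K {x : Q | ∃ a b : Q, x = a * b}

/-- `n^q`: the `n`-component of the center of the crossed module `(n,q,δ)`. -/
def zN (X : LeibnizXMod K N Q) : Submodule K N where
  carrier := {n : N | ∀ q : Q, X.actL q n = 0 ∧ X.actR n q = 0}
  zero_mem' := by intro q; simp
  add_mem' := by
    intro a b ha hb q
    have h1 := ha q; have h2 := hb q
    constructor <;> simp [map_add, h1.1, h1.2, h2.1, h2.2]
  smul_mem' := by
    intro c a ha q
    have h1 := ha q
    constructor <;> simp [map_smul, h1.1, h1.2]

/-- `st_q(n) ∩ Z(q)`: the `q`-component of the center of `(n,q,δ)`. -/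
def zQ (X : LeibnizXMod K N Q) : Submodule K Q where
  carrier := {q : Q | (∀ n : N, X.actL q n = 0 ∧ X.actR n q = 0) ∧
    ∀ q' : Q, q * q' = 0 ∧ q' * q = 0}
  zero_mem' := by constructor <;> intro x <;> simp
  add_mem' := by
    intro a b ha hb
    constructor
    · intro n
      have h1 := ha.1 n; have h2 := hb.1 n
      constructor <;> simp [map_add, LinearMap.add_apply, h1.1, h1.2, h2.1, h2.2]
    · intro q'
      have h1 := ha.2 q'; have h2 := hb.2 q'
      constructor
      · rw [add_mul, h1.1, h2.1, add_zero]
      · rw [mul_add, h1.2, h2.2, add_zero]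
  smul_mem' := by
    intro c a ha
    constructor
    · intro n
      have h1 := ha.1 n
      constructor <;> simp [map_smul, LinearMap.smul_apply, h1.1, h1.2]
    · intro q'
      have h1 := ha.2 q'
      constructor
      · rw [smul_mul_assoc, h1.1, smul_zero]
      · rw [mul_smul_comm, h1.2, smul_zero]

/-- The `n`-component of the commutator `[(u,r,μ),(m,f,μ)]` of the crossed
ideal with components `U1 ≤ m`, `U2 ≤ f` with the whole crossed module. -/
def commN (X : LeibnizXMod K N Q) (U1 : Submodule K N) (U2 : Submodule K Q) :
    Submodule K N :=
  Submodule.span K {x : N |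
    (∃ r ∈ U2, ∃ m : N, x = X.actL r m ∨ x = X.actR m r) ∨
    (∃ u ∈ U1, ∃ f : Q, x = X.actL f u ∨ x = X.actR u f)}

/-- The `q`-component of the commutator `[(u,r,μ),(m,f,μ)]`. -/
def commQ (U2 : Submodule K Q) : Submodule K Q :=
  Submodule.span K {x : Q | ∃ r ∈ U2, ∃ f : Q, x = r * f ∨ x = f * r}

end Invariants

/-- A Leibniz crossed module is projective if every homomorphism to the
codomain of a surjective homomorphism of Leibniz crossed modules lifts. -/
def IsProjectiveXMod {K : Type*} [Field K] {M F : Type*}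
    [NonUnitalNonAssocRing M] [NonUnitalNonAssocRing F]
    [Module K M] [Module K F] (X : LeibnizXMod K M F) : Prop :=
  ∀ (A B C D : Type) (_ : NonUnitalNonAssocRing A) (_ : NonUnitalNonAssocRing B)
    (_ : NonUnitalNonAssocRing C) (_ : NonUnitalNonAssocRing D)
    (_ : Module K A) (_ : Module K B) (_ : Module K C) (_ : Module K D)
    (_ : IsLeibniz A) (_ : IsLeibniz B) (_ : IsLeibniz C) (_ : IsLeibniz D)
    (Y : LeibnizXMod K A B) (Z : LeibnizXMod K C D) (e : XModHom K Y Z),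
    Function.Surjective e.f₁ → Function.Surjective e.f₂ →
    ∀ f : XModHom K X Z, ∃ g : XModHom K X Y,
      (∀ m, e.f₁ (g.f₁ m) = f.f₁ m) ∧ (∀ x, e.f₂ (g.f₂ x) = f.f₂ x)

/-- Auxiliary: if the action of `P` on `Bt` is trivial and `P` is perfect,
then all generators of any algebra satisfying the tensor relations vanish. -/
theorem tensorGenZero {K : Type*} [Field K] {Bt P T' : Type*}
    [NonUnitalNonAssocRing Bt] [NonUnitalNonAssocRing P] [NonUnitalNonAssocRing T']
    [Module K Bt] [Module K P] [Module K T']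
    (bp : LeibnizAction K Bt P) (pb : LeibnizAction K P Bt)
    (hpbL0 : ∀ (p : P) (b : Bt), pb.actL p b = 0)
    (hpbR0 : ∀ (b : Bt) (p : P), pb.actR b p = 0)
    (hPperf : dQ K P = ⊤)
    (el : Bt →ₗ[K] P →ₗ[K] T') (er : P →ₗ[K] Bt →ₗ[K] T')
    (rels : TensorRels K bp pb el er) :
    (∀ (b : Bt) (p : P), el b p = 0) ∧ ∀ (p : P) (b : Bt), er p b = 0 := by
  have hel1 : ∀ (b : Bt) (p : P), el b p = 0 := by
    intro b p
    have hp : p ∈ dQ K P := by rw [hPperf]; exact Submodule.mem_top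
    refine Submodule.span_induction ?_ ?_ ?_ ?_ hp
    · rintro x ⟨a, c, rfl⟩
      rw [rels.rel3a b a c, hpbR0 b a, hpbR0 b c, map_zero, LinearMap.zero_apply,
        LinearMap.zero_apply, sub_zero]
    · exact map_zero (el b)
    · intro x y _ _ hx hy
      rw [map_add, hx, hy, add_zero]
    · intro c x _ hx
      rw [map_smul, hx, smul_zero]
  refine ⟨hel1, ?_⟩
  intro p b
  have hp : p ∈ dQ K P := by rw [hPperf]; exact Submodule.mem_top
  refine Submodule.span_induction ?_ ?_ ?_ ?_ hp
  · rintro x ⟨a, c, rfl⟩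
    rw [rels.rel3d a c b, hpbL0 a b, hpbR0 b c, hel1, map_zero, sub_zero]
  · rw [map_zero, LinearMap.zero_apply]
  · intro x y _ _ hx hy
    rw [map_add, LinearMap.add_apply, hx, hy, add_zero]
  · intro c x _ hx
    rw [map_smul, LinearMap.smul_apply, hx, smul_zero]

/-- Let `(n,q,δ)` be a perfect Leibniz crossed module and
`(e) : 0 → (a,b,σ) → (h,p,σ) → (n,q,δ) → 0` a central extension which is a
stem cover.  Then `(h,p,σ)` is perfect, and `b⋆p = 0` (hence `b⋀p = 0`). -/
theorem stmt14 {K H P N Q M F TB TE : Type*} [Field K]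
    [NonUnitalNonAssocRing H] [NonUnitalNonAssocRing P]
    [NonUnitalNonAssocRing N] [NonUnitalNonAssocRing Q]
    [NonUnitalNonAssocRing M] [NonUnitalNonAssocRing F]
    [NonUnitalNonAssocRing TB] [NonUnitalNonAssocRing TE]
    [IsLeibniz H] [IsLeibniz P] [IsLeibniz N] [IsLeibniz Q]
    [IsLeibniz M] [IsLeibniz F] [IsLeibniz TB] [IsLeibniz TE]
    [Module K H] [Module K P] [Module K N] [Module K Q]
    [Module K M] [Module K F] [Module K TB] [Module K TE]
    [SMulCommClass K H H] [IsScalarTower K H H]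
    [SMulCommClass K P P] [IsScalarTower K P P]
    [SMulCommClass K N N] [IsScalarTower K N N]
    [SMulCommClass K Q Q] [IsScalarTower K Q Q]
    [SMulCommClass K M M] [IsScalarTower K M M]
    [SMulCommClass K F F] [IsScalarTower K F F]
    [SMulCommClass K TB TB] [IsScalarTower K TB TB]
    [SMulCommClass K TE TE] [IsScalarTower K TE TE]
    (X : LeibnizXMod K H P) (Y : LeibnizXMod K N Q)
    -- `(n,q,δ)` is perfect:
    (hYperfQ : dQ K Q = ⊤) (hYperfN : dN Y = ⊤)
    -- `(e)` is a central extension: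
    (φ : XModHom K X Y)
    (hs1 : Function.Surjective φ.f₁) (hs2 : Function.Surjective φ.f₂)
    (hc1 : LinearMap.ker φ.f₁ ≤ zN X) (hc2 : LinearMap.ker φ.f₂ ≤ zQ X)
    -- `(e)` is a stem extension:
    (hst1 : LinearMap.ker φ.f₁ ≤ dN X) (hst2 : LinearMap.ker φ.f₂ ≤ dQ K P)
    -- a projective presentation of `(n,q,δ)`, giving the Schur multiplier:
    (Xmf : LeibnizXMod K M F) (π : XModHom K Xmf Y)
    (hπ1 : Function.Surjective π.f₁) (hπ2 : Function.Surjective π.f₂)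
    (hproj : IsProjectiveXMod Xmf)
    (C1 : Submodule K M) (hC1 : C1 = commN Xmf (LinearMap.ker π.f₁) (LinearMap.ker π.f₂))
    (C2 : Submodule K F) (hC2 : C2 = commQ (LinearMap.ker π.f₂))
    (SM1 : Submodule K (M ⧸ C1))
    (hSM1 : SM1 = (LinearMap.ker π.f₁ ⊓ dN Xmf).map C1.mkQ)
    (SM2 : Submodule K (F ⧸ C2))
    (hSM2 : SM2 = (LinearMap.ker π.f₂ ⊓ dQ K F).map C2.mkQ)
    (hCle : C1 ≤ C2.comap Xmf.bdry)
    (hSMle : ∀ x ∈ SM1, Submodule.mapQ C1 C2 Xmf.bdry hCle x ∈ SM2)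
    -- `(e)` is a stem cover: the kernel `(a,b,σ)` is isomorphic (as an
    -- abelian crossed module) to the Schur multiplier `M(n,q,δ)`:
    (hcover : ∃ (e₁ : SM1 ≃ₗ[K] LinearMap.ker φ.f₁) (e₂ : SM2 ≃ₗ[K] LinearMap.ker φ.f₂),
      ∀ x : SM1, X.bdry (e₁ x : H) =
        (e₂ (LinearMap.restrict (Submodule.mapQ C1 C2 Xmf.bdry hCle) hSMle x) : P))
    -- the non-abelian tensor product `b⋆p` and exterior product `b⋀p`, where
    -- `b` is the kernel of `φ₂` with the induced bracket actions:
    (B : NonUnitalSubalgebra K P) (hB : ∀ p : P, p ∈ B ↔ φ.f₂ p = 0)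
    (bp : LeibnizAction K B P) (pb : LeibnizAction K P B)
    (hbpL : ∀ (b : B) (p : P), bp.actL b p = (b : P) * p)
    (hbpR : ∀ (p : P) (b : B), bp.actR p b = p * (b : P))
    (hpbL : ∀ (p : P) (b : B), (pb.actL p b : P) = p * (b : P))
    (hpbR : ∀ (b : B) (p : P), (pb.actR b p : P) = (b : P) * p)
    (incl : B →ₗ[K] P) (hincl : ∀ b : B, incl b = (b : P))
    (TP : NATensor K bp pb (T := TB))
    (E2 : NAExterior K bp pb incl (LinearMap.id : P →ₗ[K] P) (T := TE)) :
    -- `(h,p,σ)` is perfect: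
    (dN X = ⊤ ∧ dQ K P = ⊤) ∧
    -- `b⋆p = 0`:
    (∀ t : TB, t = 0) ∧
    -- hence `b⋀p = 0`:
    (∀ t : TE, t = 0) := by
  -- Step 1: `dQ K P = ⊤`.
  have hlift2 : ∀ q : Q, ∃ d ∈ dQ K P, φ.f₂ d = q := by
    intro q
    have hq : q ∈ dQ K Q := by rw [hYperfQ]; exact Submodule.mem_top
    refine Submodule.span_induction ?_ ?_ ?_ ?_ hq
    · rintro x ⟨a, b, rfl⟩
      obtain ⟨pa, rfl⟩ := hs2 a
      obtain ⟨pb, rfl⟩ := hs2 b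
      exact ⟨pa * pb, Submodule.subset_span ⟨pa, pb, rfl⟩, φ.f₂_mul pa pb⟩
    · exact ⟨0, Submodule.zero_mem _, map_zero _⟩
    · rintro x y _ _ ⟨dx, hdx, rfl⟩ ⟨dy, hdy, rfl⟩
      exact ⟨dx + dy, Submodule.add_mem _ hdx hdy, map_add _ _ _⟩
    · rintro c x _ ⟨dx, hdx, rfl⟩
      exact ⟨c • dx, Submodule.smul_mem _ _ hdx, map_smul _ _ _⟩
  have hPperf : dQ K P = ⊤ := by
    rw [Submodule.eq_top_iff']
    intro p
    obtain ⟨d, hd, hde⟩ := hlift2 (φ.f₂ p)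
    have hker : p - d ∈ LinearMap.ker φ.f₂ := by
      rw [LinearMap.mem_ker, map_sub, hde, sub_self]
    have : p - d ∈ dQ K P := hst2 hker
    have := Submodule.add_mem _ this hd
    simpa using this
  -- Step 2: `dN X = ⊤`.
  have hlift1 : ∀ n : N, ∃ d ∈ dN X, φ.f₁ d = n := by
    intro n
    have hn : n ∈ dN Y := by rw [hYperfN]; exact Submodule.mem_top
    refine Submodule.span_induction ?_ ?_ ?_ ?_ hn
    · rintro x ⟨q, m, hx | hx⟩
      · obtain ⟨p, rfl⟩ := hs2 q
        obtain ⟨h, rfl⟩ := hs1 m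
        exact ⟨X.actL p h, Submodule.subset_span ⟨p, h, Or.inl rfl⟩,
          by rw [φ.actL_compat, hx]⟩
      · obtain ⟨p, rfl⟩ := hs2 q
        obtain ⟨h, rfl⟩ := hs1 m
        exact ⟨X.actR h p, Submodule.subset_span ⟨p, h, Or.inr rfl⟩,
          by rw [φ.actR_compat, hx]⟩
    · exact ⟨0, Submodule.zero_mem _, map_zero _⟩
    · rintro x y _ _ ⟨dx, hdx, rfl⟩ ⟨dy, hdy, rfl⟩
      exact ⟨dx + dy, Submodule.add_mem _ hdx hdy, map_add _ _ _⟩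
    · rintro c x _ ⟨dx, hdx, rfl⟩
      exact ⟨c • dx, Submodule.smul_mem _ _ hdx, map_smul _ _ _⟩
  have hHperf : dN X = ⊤ := by
    rw [Submodule.eq_top_iff']
    intro h
    obtain ⟨d, hd, hde⟩ := hlift1 (φ.f₁ h)
    have hker : h - d ∈ LinearMap.ker φ.f₁ := by
      rw [LinearMap.mem_ker, map_sub, hde, sub_self]
    have : h - d ∈ dN X := hst1 hker
    have := Submodule.add_mem _ this hd
    simpa using this
  -- Step 3: elements of `B` are central in `P`.
  have hBz : ∀ (b : B) (p : P), (b : P) * p = 0 ∧ p * (b : P) = 0 := by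
    intro b p
    have hk : (b : P) ∈ LinearMap.ker φ.f₂ :=
      LinearMap.mem_ker.mpr ((hB (b : P)).mp b.2)
    exact (hc2 hk).2 p
  -- The induced actions of `P` on `B` are trivial.
  have hpbL0 : ∀ (p : P) (b : B), pb.actL p b = 0 := by
    intro p b
    apply Subtype.ext
    rw [ZeroMemClass.coe_zero, hpbL]
    exact (hBz b p).2
  have hpbR0 : ∀ (b : B) (p : P), pb.actR b p = 0 := by
    intro b p
    apply Subtype.ext
    rw [ZeroMemClass.coe_zero, hpbR]
    exact (hBz b p).1
  refine ⟨⟨hHperf, hPperf⟩, ?_, ?_⟩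
  · -- `b ⋆ p = 0`
    obtain ⟨h1, h2⟩ := tensorGenZero bp pb hpbL0 hpbR0 hPperf TP.el TP.er TP.rels
    intro t
    have ht : t ∈ NonUnitalAlgebra.adjoin K
        ({t : TB | ∃ m n, t = TP.el m n ∨ t = TP.er n m}) := by
      rw [TP.gen]; trivial
    have hle : NonUnitalAlgebra.adjoin K
        ({t : TB | ∃ m n, t = TP.el m n ∨ t = TP.er n m}) ≤ ⊥ := by
      apply NonUnitalAlgebra.adjoin_le
      rintro x ⟨m, n, rfl | rfl⟩
      · rw [h1]; exact (⊥ : NonUnitalSubalgebra K TB).zero_mem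
      · rw [h2]; exact (⊥ : NonUnitalSubalgebra K TB).zero_mem
    exact NonUnitalAlgebra.mem_bot.mp (hle ht)
  · -- `b ⋀ p = 0`
    obtain ⟨h1, h2⟩ := tensorGenZero bp pb hpbL0 hpbR0 hPperf E2.el E2.er E2.rels
    intro t
    have ht : t ∈ NonUnitalAlgebra.adjoin K
        ({t : TE | ∃ m n, t = E2.el m n ∨ t = E2.er n m}) := by
      rw [E2.gen]; trivial
    have hle : NonUnitalAlgebra.adjoin K
        ({t : TE | ∃ m n, t = E2.el m n ∨ t = E2.er n m}) ≤ ⊥ := by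
      apply NonUnitalAlgebra.adjoin_le
      rintro x ⟨m, n, rfl | rfl⟩
      · rw [h1]; exact (⊥ : NonUnitalSubalgebra K TE).zero_mem
      · rw [h2]; exact (⊥ : NonUnitalSubalgebra K TE).zero_mem
    exact NonUnitalAlgebra.mem_bot.mp (hle ht)
end

section
/- If q is a perfect Leibniz algebra (q = [q,q]) and (n,q,δ) is a perfect Leibniz crossed module (so also D_q(n) = n), then the exterior product satisfies q⋀n ⊆ D_{q⋀q}(q⋀n) and [q⋀q, q⋀q] = q⋀q; i.e., the Leibniz crossed module (q⋀n, q⋀q, id⋀δ) is perfect. -/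
private lemma helperSpan {K A V : Type*} [Field K] [AddCommGroup A] [Module K A]
    [AddCommGroup V] [Module K V] {s : Set A}
    (hs : Submodule.span K s = ⊤) (S : Submodule K V) (f : A →ₗ[K] V)
    (h : ∀ a ∈ s, f a ∈ S) : ∀ a, f a ∈ S := fun a => by
  have h2 : Submodule.span K s ≤ S.comap f := Submodule.span_le.2 h
  have ha : a ∈ (⊤ : Submodule K A) := Submodule.mem_top
  rw [← hs] at ha
  exact h2 ha

/-- If `(n,q,δ)` is a perfect Leibniz crossed module (so
`q = [q,q]` and `D_q(n) = n`), then `q⋀n ⊆ D_{q⋀q}(q⋀n)` and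
`[q⋀q, q⋀q] = q⋀q`, i.e. the Leibniz crossed module `(q⋀n, q⋀q, id⋀δ)` is
perfect. -/
theorem stmt15 {K N Q T T' : Type*} [Field K]
    [NonUnitalNonAssocRing N] [NonUnitalNonAssocRing Q]
    [NonUnitalNonAssocRing T] [NonUnitalNonAssocRing T']
    [IsLeibniz N] [IsLeibniz Q] [IsLeibniz T] [IsLeibniz T']
    [Module K N] [Module K Q] [Module K T] [Module K T']
    [SMulCommClass K N N] [IsScalarTower K N N]
    [SMulCommClass K Q Q] [IsScalarTower K Q Q]
    [SMulCommClass K T T] [IsScalarTower K T T]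
    [SMulCommClass K T' T'] [IsScalarTower K T' T']
    (X : LeibnizXMod K N Q)
    -- the action of `n` on `q` induced by `δ` and the bracket action of `q`:
    (nq : LeibnizAction K N Q)
    (hnqL : ∀ n q, nq.actL n q = X.bdry n * q)
    (hnqR : ∀ q n, nq.actR q n = q * X.bdry n)
    (qq : LeibnizAction K Q Q)
    (hqqL : ∀ a b : Q, qq.actL a b = a * b)
    (hqqR : ∀ a b : Q, qq.actR a b = a * b)
    -- the exterior products `q⋀n` and `q⋀q`:
    (EN : NAExterior K X.toLeibnizAction nq (LinearMap.id : Q →ₗ[K] Q) X.bdry (T := T))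
    (EQ : NAExterior K qq qq (LinearMap.id : Q →ₗ[K] Q) (LinearMap.id : Q →ₗ[K] Q) (T := T'))
    -- the structure map `μ̄_q : q⋀q → q`:
    (mu : T' →ₗ[K] Q)
    (hmu_el : ∀ a b : Q, mu (EQ.el a b) = a * b)
    (hmu_er : ∀ a b : Q, mu (EQ.er a b) = a * b)
    -- the exterior crossed module `(q⋀n, q⋀q, id⋀δ)`:
    (X' : LeibnizXMod K T T')
    (hbd_el : ∀ q n, X'.bdry (EN.el q n) = EQ.el q (X.bdry n))
    (hbd_er : ∀ n q, X'.bdry (EN.er n q) = EQ.el (X.bdry n) q)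
    (hact : ∀ (x : T') (q' : Q) (n' : N),
      (X'.actL x (EN.el q' n') = EN.el (mu x * q') n' - EN.er (X.actL (mu x) n') q') ∧
      (X'.actL x (EN.er n' q') = EN.er (X.actL (mu x) n') q' - EN.el (mu x * q') n') ∧
      (X'.actR (EN.el q' n') x = EN.el (q' * mu x) n' + EN.el q' (X.actR n' (mu x))) ∧
      (X'.actR (EN.er n' q') x = EN.er (X.actR n' (mu x)) q' + EN.er n' (q' * mu x)))
    -- `(n,q,δ)` is perfect:
    (hQperf : Submodule.span K {z : Q | ∃ a b : Q, z = a * b} = ⊤)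
    (hNperf : Submodule.span K {z : N | ∃ q n, z = X.actL q n ∨ z = X.actR n q} = ⊤) :
    -- `(q⋀n, q⋀q, id⋀δ)` is perfect:
    Submodule.span K {z : T' | ∃ a b : T', z = a * b} = ⊤ ∧
    Submodule.span K {z : T | ∃ (x : T') (y : T), z = X'.actL x y ∨ z = X'.actR y x} = ⊤ := by
  constructor
  · -- `[q⋀q, q⋀q] = q⋀q`
    set S₁ : Submodule K T' := Submodule.span K {z : T' | ∃ a b : T', z = a * b} with hS₁
    have memP : ∀ a b : T', a * b ∈ S₁ := fun a b => Submodule.subset_span ⟨a, b, rfl⟩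
    have hel2 : ∀ a₁ a₂ b₁ b₂ : Q, EQ.el (a₁ * a₂) (b₁ * b₂) ∈ S₁ := by
      intro a₁ a₂ b₁ b₂
      have h5 := (EQ.rels.rel5a a₁ a₂ b₁ b₂).1
      rw [hqqR, hqqL] at h5
      rw [← h5]; exact memP _ _
    have her2 : ∀ a₁ a₂ b₁ b₂ : Q, EQ.er (a₁ * a₂) (b₁ * b₂) ∈ S₁ := by
      intro a₁ a₂ b₁ b₂
      have h5 := (EQ.rels.rel5b a₁ a₂ b₁ b₂).2
      rw [hqqR, hqqL] at h5
      rw [← h5]; exact memP _ _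
    have hel : ∀ a b : Q, EQ.el a b ∈ S₁ := by
      intro a b
      refine helperSpan hQperf S₁ (EQ.el a) ?_ b
      rintro z ⟨x, y, rfl⟩
      refine helperSpan hQperf S₁ (EQ.el.flip (x * y)) ?_ a
      rintro w ⟨u, v, rfl⟩
      exact hel2 u v x y
    have her : ∀ a b : Q, EQ.er a b ∈ S₁ := by
      intro a b
      refine helperSpan hQperf S₁ (EQ.er a) ?_ b
      rintro z ⟨x, y, rfl⟩
      refine helperSpan hQperf S₁ (EQ.er.flip (x * y)) ?_ a
      rintro w ⟨u, v, rfl⟩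
      exact her2 u v x y
    let A' : NonUnitalSubalgebra K T' :=
      { S₁ with mul_mem' := fun {a b} _ _ => memP a b }
    have hsub : {t : T' | ∃ m n, t = EQ.el m n ∨ t = EQ.er n m} ⊆ A' := by
      rintro z ⟨m, n, rfl | rfl⟩
      · exact hel m n
      · exact her n m
    have hle := NonUnitalAlgebra.adjoin_le hsub
    rw [EQ.gen] at hle
    exact Submodule.eq_top_iff'.2 fun x => hle (by trivial)
  · -- `D_{q⋀q}(q⋀n) = q⋀n`
    set S : Submodule K T :=
      Submodule.span K {z : T | ∃ (x : T') (y : T), z = X'.actL x y ∨ z = X'.actR y x} with hS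
    have memL : ∀ (x : T') (y : T), X'.actL x y ∈ S :=
      fun x y => Submodule.subset_span ⟨x, y, Or.inl rfl⟩
    have memR : ∀ (y : T) (x : T'), X'.actR y x ∈ S :=
      fun y x => Submodule.subset_span ⟨x, y, Or.inr rfl⟩
    -- key identity I1
    have I1 : ∀ q₁ q₂ q' n', X'.actL (EQ.el q₁ q₂) (EN.el q' n')
        = EN.el (q₁ * q₂) (X.actL q' n') := by
      intro q₁ q₂ q' n'
      have h := (hact (EQ.el q₁ q₂) q' n').1
      rw [hmu_el] at h
      have h3c := EN.rels.rel3c (q₁ * q₂) q' n'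
      have h4a := EN.rels.rel4a (q₁ * q₂) q' n'
      rw [h, h3c, h4a]
      abel
    have B1 : ∀ q q' n', EN.el q (X.actL q' n') ∈ S := by
      intro q q' n'
      refine helperSpan hQperf S (EN.el.flip (X.actL q' n')) ?_ q
      rintro z ⟨a, b, rfl⟩
      show EN.el (a * b) (X.actL q' n') ∈ S
      rw [← I1 a b q' n']
      exact memL _ _
    have B2 : ∀ q n' q', EN.el q (X.actR n' q') ∈ S := by
      intro q n' q'
      refine helperSpan hQperf S (EN.el.flip (X.actR n' q')) ?_ q
      rintro z ⟨a, b, rfl⟩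
      show EN.el (a * b) (X.actR n' q') ∈ S
      have h2 : EN.el (a * b) (X.actR n' q') = - X'.actL (EQ.el a b) (EN.el q' n') := by
        rw [I1 a b q' n', EN.rels.rel4a (a * b) q' n', neg_neg]
      rw [h2]
      exact S.neg_mem (memL _ _)
    have B : ∀ q n, EN.el q n ∈ S := by
      intro q n
      refine helperSpan hNperf S (EN.el q) ?_ n
      rintro z ⟨q₀, n₀, rfl | rfl⟩
      · exact B1 q q₀ n₀
      · exact B2 q n₀ q₀
    -- key identity I2
    have I2 : ∀ q₁ q₂ n₀ q, EN.er (X.actL (q₁ * q₂) n₀) q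
        = X'.actL (EQ.el q₁ q₂) (EN.er n₀ q) + EN.el ((q₁ * q₂) * q) n₀ := by
      intro q₁ q₂ n₀ q
      have h := (hact (EQ.el q₁ q₂) q n₀).2.1
      rw [hmu_el] at h
      rw [h]; abel
    -- key identity I3
    have I3 : ∀ n₀ q₀ q₁ q₂, EN.er (X.actR n₀ q₀) (q₁ * q₂)
        = X'.actR (EN.er n₀ q₀) (EQ.el q₁ q₂) := by
      intro n₀ q₀ q₁ q₂
      have h := (hact (EQ.el q₁ q₂) q₀ n₀).2.2.2
      rw [hmu_el] at h
      have h3b := EN.rels.rel3b n₀ q₀ (q₁ * q₂)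
      rw [h, h3b]; abel
    have C1 : ∀ (q₀ : Q) (n₀ : N) (q : Q), EN.er (X.actL q₀ n₀) q ∈ S := by
      intro q₀ n₀ q
      refine helperSpan hQperf S ((EN.er.flip q).comp (X.actL.flip n₀)) ?_ q₀
      rintro z ⟨a, b, rfl⟩
      show EN.er (X.actL (a * b) n₀) q ∈ S
      rw [I2 a b n₀ q]
      exact S.add_mem (memL _ _) (B _ _)
    have C2 : ∀ (n₀ : N) (q₀ : Q) (q : Q), EN.er (X.actR n₀ q₀) q ∈ S := by
      intro n₀ q₀ q
      refine helperSpan hQperf S (EN.er (X.actR n₀ q₀)) ?_ q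
      rintro z ⟨a, b, rfl⟩
      show EN.er (X.actR n₀ q₀) (a * b) ∈ S
      rw [I3 n₀ q₀ a b]
      exact memR _ _
    have C : ∀ n q, EN.er n q ∈ S := by
      intro n q
      refine helperSpan hNperf S (EN.er.flip q) ?_ n
      rintro z ⟨q₀, n₀, rfl | rfl⟩
      · exact C1 q₀ n₀ q
      · exact C2 n₀ q₀ q
    have memMul : ∀ a b : T, a * b ∈ S := by
      intro a b
      rw [← X'.peiffer_l a b]
      exact memL _ _
    let A' : NonUnitalSubalgebra K T :=
      { S with mul_mem' := fun {a b} _ _ => memMul a b }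
    have hsub : {t : T | ∃ m n, t = EN.el m n ∨ t = EN.er n m} ⊆ A' := by
      rintro z ⟨m, n, rfl | rfl⟩
      · exact B m n
      · exact C n m
    have hle := NonUnitalAlgebra.adjoin_le hsub
    rw [EN.gen] at hle
    exact Submodule.eq_top_iff'.2 fun x => hle (by trivial)
end

section
/- Let (e) : 0 → (a,b,σ) → (h,p,σ) → (n,q,δ) → 0 be a stem extension of a Leibniz crossed module (n,q,δ) whose Schur multiplier M(n,q,δ) is finite dimensional. Then (e) is a stem cover if and only if the connecting homomorphism θ*(e) : M(n,q,δ) → (a,b,σ) in the five-term exact sequence is an isomorphism. -/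
section Aux

variable {K : Type*} [Field K] {H P M F N Q : Type*}
    [NonUnitalNonAssocRing H] [NonUnitalNonAssocRing P]
    [NonUnitalNonAssocRing M] [NonUnitalNonAssocRing F]
    [NonUnitalNonAssocRing N] [NonUnitalNonAssocRing Q]
    [Module K H] [Module K P] [Module K M] [Module K F] [Module K N] [Module K Q]
    [SMulCommClass K H H] [IsScalarTower K H H]
    [SMulCommClass K P P] [IsScalarTower K P P]
    [SMulCommClass K M M] [IsScalarTower K M M]
    [SMulCommClass K F F] [IsScalarTower K F F]
    [SMulCommClass K N N] [IsScalarTower K N N]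
    [SMulCommClass K Q Q] [IsScalarTower K Q Q]

/-- Generators of `dN X` lift along `β` when the kernels of `φ` are central. -/
lemma dN_le_map (X : LeibnizXMod K H P) (Y : LeibnizXMod K N Q)
    (φ : XModHom K X Y) (hs2 : Function.Surjective φ.f₂)
    (hc1 : LinearMap.ker φ.f₁ ≤ zN X) (hc2 : LinearMap.ker φ.f₂ ≤ zQ X)
    (Xmf : LeibnizXMod K M F) (π : XModHom K Xmf Y)
    (hπ1 : Function.Surjective π.f₁) (hπ2 : Function.Surjective π.f₂)
    (β : XModHom K Xmf X)
    (hβ1 : ∀ m, φ.f₁ (β.f₁ m) = π.f₁ m) (hβ2 : ∀ f, φ.f₂ (β.f₂ f) = π.f₂ f) :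
    dN X ≤ (dN Xmf).map β.f₁ := by
  rw [dN]
  apply Submodule.span_le.2
  rintro x ⟨p, h, hx⟩
  obtain ⟨f, hf⟩ := hπ2 (φ.f₂ p)
  obtain ⟨m, hm⟩ := hπ1 (φ.f₁ h)
  have hz : β.f₂ f - p ∈ zQ X := by
    apply hc2
    rw [LinearMap.mem_ker, map_sub, hβ2, hf, sub_self]
  have hw : β.f₁ m - h ∈ zN X := by
    apply hc1
    rw [LinearMap.mem_ker, map_sub, hβ1, hm, sub_self]
  set z := β.f₂ f - p with hzd
  set w := β.f₁ m - h with hwd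
  have hf' : β.f₂ f = p + z := by rw [hzd]; abel
  have hm' : β.f₁ m = h + w := by rw [hwd]; abel
  have hwf : ∀ q : P, X.actL q w = 0 ∧ X.actR w q = 0 := hw
  have hzf : ∀ n : H, X.actL z n = 0 ∧ X.actR n z = 0 := hz.1
  rcases hx with rfl | rfl
  · refine ⟨Xmf.actL f m, Submodule.subset_span ⟨f, m, Or.inl rfl⟩, ?_⟩
    simp [β.actL_compat, hf', hm', map_add, LinearMap.add_apply,
      (hzf h).1, (hzf w).1, (hwf p).1]
  · refine ⟨Xmf.actR m f, Submodule.subset_span ⟨f, m, Or.inr rfl⟩, ?_⟩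
    simp [β.actR_compat, hf', hm', map_add, LinearMap.add_apply,
      (hzf h).2, (hzf w).2, (hwf p).2]

/-- Generators of `dQ K P` lift along `β` when the kernel of `φ.f₂` is central. -/
lemma dQ_le_map (X : LeibnizXMod K H P) (Y : LeibnizXMod K N Q)
    (φ : XModHom K X Y) (hc2 : LinearMap.ker φ.f₂ ≤ zQ X)
    (Xmf : LeibnizXMod K M F) (π : XModHom K Xmf Y)
    (hπ2 : Function.Surjective π.f₂)
    (β : XModHom K Xmf X) (hβ2 : ∀ f, φ.f₂ (β.f₂ f) = π.f₂ f) :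
    dQ K P ≤ (dQ K F).map β.f₂ := by
  rw [dQ]
  apply Submodule.span_le.2
  rintro x ⟨a, b, rfl⟩
  obtain ⟨f, hf⟩ := hπ2 (φ.f₂ a)
  obtain ⟨g, hg⟩ := hπ2 (φ.f₂ b)
  have hz : β.f₂ f - a ∈ zQ X := by
    apply hc2
    rw [LinearMap.mem_ker, map_sub, hβ2, hf, sub_self]
  have hz' : β.f₂ g - b ∈ zQ X := by
    apply hc2
    rw [LinearMap.mem_ker, map_sub, hβ2, hg, sub_self]
  set z := β.f₂ f - a with hzd
  set z' := β.f₂ g - b with hzd'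
  have hf' : β.f₂ f = a + z := by rw [hzd]; abel
  have hg' : β.f₂ g = b + z' := by rw [hzd']; abel
  refine ⟨f * g, Submodule.subset_span ⟨f, g, rfl⟩, ?_⟩
  rw [β.f₂_mul, hf', hg', add_mul, mul_add, mul_add, (hz'.2 a).2, (hz.2 b).1,
    (hz.2 z').1, add_zero, add_zero, add_zero]

end Aux

/-- Let `(e) : 0 → (a,b,σ) → (h,p,σ) → (n,q,δ) → 0` be a stem
extension of a Leibniz crossed module whose Schur multiplier `M(n,q,δ)` is
finite dimensional.  Then `(e)` is a stem cover if and only if the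
connecting homomorphism `θ*(e) : M(n,q,δ) → (a,b,σ)` of the five-term exact
sequence is an isomorphism. -/
theorem stmt17 {K H P M F N Q : Type*} [Field K]
    [NonUnitalNonAssocRing H] [NonUnitalNonAssocRing P]
    [NonUnitalNonAssocRing M] [NonUnitalNonAssocRing F]
    [NonUnitalNonAssocRing N] [NonUnitalNonAssocRing Q]
    [IsLeibniz H] [IsLeibniz P] [IsLeibniz M] [IsLeibniz F] [IsLeibniz N] [IsLeibniz Q]
    [Module K H] [Module K P] [Module K M] [Module K F] [Module K N] [Module K Q]
    [SMulCommClass K H H] [IsScalarTower K H H]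
    [SMulCommClass K P P] [IsScalarTower K P P]
    [SMulCommClass K M M] [IsScalarTower K M M]
    [SMulCommClass K F F] [IsScalarTower K F F]
    [SMulCommClass K N N] [IsScalarTower K N N]
    [SMulCommClass K Q Q] [IsScalarTower K Q Q]
    (X : LeibnizXMod K H P) (Y : LeibnizXMod K N Q)
    -- `(e)` is a stem extension (a central extension with kernel inside the
    -- derived crossed module):
    (φ : XModHom K X Y)
    (hs1 : Function.Surjective φ.f₁) (hs2 : Function.Surjective φ.f₂)
    (hc1 : LinearMap.ker φ.f₁ ≤ zN X) (hc2 : LinearMap.ker φ.f₂ ≤ zQ X)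
    (hst1 : LinearMap.ker φ.f₁ ≤ dN X) (hst2 : LinearMap.ker φ.f₂ ≤ dQ K P)
    -- a projective presentation of `(n,q,δ)` defining the Schur multiplier:
    (Xmf : LeibnizXMod K M F) (π : XModHom K Xmf Y)
    (hπ1 : Function.Surjective π.f₁) (hπ2 : Function.Surjective π.f₂)
    (hproj : IsProjectiveXMod Xmf)
    (C1 : Submodule K M) (hC1 : C1 = commN Xmf (LinearMap.ker π.f₁) (LinearMap.ker π.f₂))
    (C2 : Submodule K F) (hC2 : C2 = commQ (LinearMap.ker π.f₂))
    (SM1 : Submodule K (M ⧸ C1))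
    (hSM1 : SM1 = (LinearMap.ker π.f₁ ⊓ dN Xmf).map C1.mkQ)
    (SM2 : Submodule K (F ⧸ C2))
    (hSM2 : SM2 = (LinearMap.ker π.f₂ ⊓ dQ K F).map C2.mkQ)
    (hCle : C1 ≤ C2.comap Xmf.bdry)
    (hSMle : ∀ x ∈ SM1, Submodule.mapQ C1 C2 Xmf.bdry hCle x ∈ SM2)
    -- `M(n,q,δ)` is finite dimensional:
    (hfd1 : FiniteDimensional K SM1) (hfd2 : FiniteDimensional K SM2)
    -- a lift `β : (m,f,μ) → (h,p,σ)` of `π` through `φ` (it exists by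
    -- projectivity), inducing the connecting map `θ*(e)`:
    (β : XModHom K Xmf X)
    (hβ1 : ∀ m, φ.f₁ (β.f₁ m) = π.f₁ m) (hβ2 : ∀ f, φ.f₂ (β.f₂ f) = π.f₂ f)
    (hβC1 : C1 ≤ LinearMap.ker β.f₁) (hβC2 : C2 ≤ LinearMap.ker β.f₂) :
    -- `(e)` is a stem cover, i.e. `(a,b,σ) ≅ M(n,q,δ)` ...
    (∃ (e₁ : SM1 ≃ₗ[K] LinearMap.ker φ.f₁) (e₂ : SM2 ≃ₗ[K] LinearMap.ker φ.f₂),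
      ∀ x : SM1, X.bdry (e₁ x : H) =
        (e₂ (LinearMap.restrict (Submodule.mapQ C1 C2 Xmf.bdry hCle) hSMle x) : P))
    ↔
    -- ... iff `θ*(e)` is an isomorphism (onto the kernel `(a,b,σ)`):
    (Function.Injective ((Submodule.liftQ C1 β.f₁ hβC1).comp SM1.subtype) ∧
     LinearMap.range ((Submodule.liftQ C1 β.f₁ hβC1).comp SM1.subtype) = LinearMap.ker φ.f₁ ∧
     Function.Injective ((Submodule.liftQ C2 β.f₂ hβC2).comp SM2.subtype) ∧
     LinearMap.range ((Submodule.liftQ C2 β.f₂ hβC2).comp SM2.subtype) = LinearMap.ker φ.f₂)  := by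
  classical
  haveI := hfd1
  haveI := hfd2
  -- abbreviations for the two components of the connecting map
  set T₁ := (Submodule.liftQ C1 β.f₁ hβC1).comp SM1.subtype with hT₁
  set T₂ := (Submodule.liftQ C2 β.f₂ hβC2).comp SM2.subtype with hT₂
  -- the ranges of the connecting maps are exactly the kernels of φ.
  have hrange1 : LinearMap.range T₁ = LinearMap.ker φ.f₁ := by
    apply le_antisymm
    · rintro x ⟨⟨y, hy⟩, rfl⟩
      rw [hSM1] at hy
      obtain ⟨m, hm, rfl⟩ := hy
      have : T₁ ⟨C1.mkQ m, hy⟩ = β.f₁ m := by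
        simp [hT₁, Submodule.mkQ_apply, Submodule.liftQ_apply]
      rw [LinearMap.mem_ker]
      simp only [hT₁, LinearMap.comp_apply, Submodule.subtype_apply, Submodule.mkQ_apply,
        Submodule.liftQ_apply]
      rw [hβ1]
      exact hm.1
    · intro a ha
      have hd : a ∈ (dN Xmf).map β.f₁ :=
        dN_le_map X Y φ hs2 hc1 hc2 Xmf π hπ1 hπ2 β hβ1 hβ2 (hst1 ha)
      obtain ⟨u, hu, rfl⟩ := hd
      have hker : u ∈ LinearMap.ker π.f₁ := by
        rw [LinearMap.mem_ker, ← hβ1]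
        exact ha
      have hmem : C1.mkQ u ∈ SM1 := by
        rw [hSM1]
        exact ⟨u, ⟨hker, hu⟩, rfl⟩
      exact ⟨⟨C1.mkQ u, hmem⟩, by
        simp [hT₁, Submodule.mkQ_apply, Submodule.liftQ_apply]⟩
  have hrange2 : LinearMap.range T₂ = LinearMap.ker φ.f₂ := by
    apply le_antisymm
    · rintro x ⟨⟨y, hy⟩, rfl⟩
      rw [hSM2] at hy
      obtain ⟨m, hm, rfl⟩ := hy
      rw [LinearMap.mem_ker]
      simp only [hT₂, LinearMap.comp_apply, Submodule.subtype_apply, Submodule.mkQ_apply,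
        Submodule.liftQ_apply]
      rw [hβ2]
      exact hm.1
    · intro a ha
      have hd : a ∈ (dQ K F).map β.f₂ :=
        dQ_le_map X Y φ hc2 Xmf π hπ2 β hβ2 (hst2 ha)
      obtain ⟨u, hu, rfl⟩ := hd
      have hker : u ∈ LinearMap.ker π.f₂ := by
        rw [LinearMap.mem_ker, ← hβ2]
        exact ha
      have hmem : C2.mkQ u ∈ SM2 := by
        rw [hSM2]
        exact ⟨u, ⟨hker, hu⟩, rfl⟩
      exact ⟨⟨C2.mkQ u, hmem⟩, by
        simp [hT₂, Submodule.mkQ_apply, Submodule.liftQ_apply]⟩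
  constructor
  · -- stem cover ⇒ θ* iso
    rintro ⟨e₁, e₂, -⟩
    haveI : FiniteDimensional K (LinearMap.ker φ.f₁) :=
      LinearEquiv.finiteDimensional e₁
    haveI : FiniteDimensional K (LinearMap.ker φ.f₂) :=
      LinearEquiv.finiteDimensional e₂
    have hinj1 : Function.Injective T₁ := by
      rw [← LinearMap.ker_eq_bot, ← Submodule.finrank_eq_zero]
      have h3 := LinearMap.finrank_range_add_finrank_ker T₁
      rw [hrange1, e₁.finrank_eq] at h3
      omega
    have hinj2 : Function.Injective T₂ := by
      rw [← LinearMap.ker_eq_bot, ← Submodule.finrank_eq_zero]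
      have h3 := LinearMap.finrank_range_add_finrank_ker T₂
      rw [hrange2, e₂.finrank_eq] at h3
      omega
    exact ⟨hinj1, hrange1, hinj2, hrange2⟩
  · -- θ* iso ⇒ stem cover
    rintro ⟨hinj1, -, hinj2, -⟩
    have hmem1 : ∀ x : SM1, T₁ x ∈ LinearMap.ker φ.f₁ := by
      intro x; rw [← hrange1]; exact ⟨x, rfl⟩
    have hmem2 : ∀ x : SM2, T₂ x ∈ LinearMap.ker φ.f₂ := by
      intro x; rw [← hrange2]; exact ⟨x, rfl⟩
    have hbij1 : Function.Bijective (T₁.codRestrict (LinearMap.ker φ.f₁) hmem1) := by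
      constructor
      · intro a b hab
        apply hinj1
        simpa [Subtype.ext_iff] using hab
      · rintro ⟨a, ha⟩
        rw [← hrange1] at ha
        obtain ⟨x, hx⟩ := ha
        exact ⟨x, Subtype.ext hx⟩
    have hbij2 : Function.Bijective (T₂.codRestrict (LinearMap.ker φ.f₂) hmem2) := by
      constructor
      · intro a b hab
        apply hinj2
        simpa [Subtype.ext_iff] using hab
      · rintro ⟨a, ha⟩
        rw [← hrange2] at ha
        obtain ⟨x, hx⟩ := ha
        exact ⟨x, Subtype.ext hx⟩
    refine ⟨LinearEquiv.ofBijective _ hbij1, LinearEquiv.ofBijective _ hbij2, ?_⟩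
    intro x
    simp only [LinearEquiv.ofBijective_apply, LinearMap.codRestrict_apply]
    show X.bdry (T₁ x) = T₂ ((Submodule.mapQ C1 C2 Xmf.bdry hCle).restrict hSMle x)
    simp only [hT₁, hT₂, LinearMap.comp_apply, Submodule.subtype_apply]
    rw [LinearMap.restrict_coe_apply]
    obtain ⟨m, hm⟩ := C1.mkQ_surjective (x : M ⧸ C1)
    rw [← hm]
    simp only [Submodule.mkQ_apply, Submodule.liftQ_apply, Submodule.mapQ_apply]
    exact (β.comm m).symm
end
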